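/- Under the hypotheses of the empirical error theorem — k ≥ 2, λ ≥ 0, m ∈ ℝ⁴_{≥0}, a c-conjugate tuple f ∈ (𝒞_m)^k with zero set Γ and curve γ = γ_f, independent U, R with U ∈ Γ a.s., E[R] = 0, X = U + R with E‖X‖² < ∞, i.i.d. samples X_1, …, X_n, and f̂ a random c-conjugate empirical minimizer in (𝒞_m)^k of n^{-1} Σ_m [ H(X_m; h) + λ ‖X_m − γ_h(s(X_m))‖² ] with γ̂ = γ_{f̂} — assume additionally that the components of the noise are mutually uncorrelated: E[R_i R_j] = 0 for all i ≠ j. Then E[ n^{-1} Σ_{m=1}^n ‖γ(s(X_m)) − γ̂(s(X_m))‖² ] ≤ (32λ + 2m₂ + 8)/(2λ + 1) · E‖R‖², a bound not depending on the dimension k. -/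

import Mathlib

open MeasureTheory ProbabilityTheory Finset

noncomputable section

/-- The admissible class `𝒞_m`: `C²` functions with `|f(0)| ≤ m₀`, `|f'(0)| ≤ m₁`,
`0 ≤ f'' ≤ m₂`, and `f''` Lipschitz with constant `m₃`. -/
def Cm (m₀ m₁ m₂ m₃ : ℝ) : Set (ℝ → ℝ) :=
  {f | ContDiff ℝ 2 f ∧ |f 0| ≤ m₀ ∧ |deriv f 0| ≤ m₁ ∧
    (∀ x : ℝ, 0 ≤ deriv (deriv f) x ∧ deriv (deriv f) x ≤ m₂) ∧
    (∀ x x' : ℝ, |deriv (deriv f) x - deriv (deriv f) x'| ≤ m₃ * |x - x'|)}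

/-- The diagonal coordinate `s(x) = Σ_i x_i`. -/
def sCoord {k : ℕ} (x : Fin k → ℝ) : ℝ := ∑ i, x i

/-- The pairwise-product cost `c(x) = Σ_{i<j} x_i x_j`. -/
def cCost {k : ℕ} (x : Fin k → ℝ) : ℝ :=
  ∑ p ∈ Finset.univ.filter (fun p : Fin k × Fin k => p.1 < p.2), x p.1 * x p.2

/-- The loss `H(x; f) = Σ_i f_i(x_i) − c(x)`. -/
def Hfun {k : ℕ} (f : Fin k → ℝ → ℝ) (x : Fin k → ℝ) : ℝ :=
  (∑ i, f i (x i)) - cCost x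

/-- The tuple `f` is `c`-conjugate: each `f_i(t)` is the supremum of
`c(x) − Σ_{j≠i} f_j(x_j)` over all `x` with `x_i = t`. -/
def CConjugateTuple {k : ℕ} (f : Fin k → ℝ → ℝ) : Prop :=
  ∀ (i : Fin k) (t : ℝ),
    IsLUB {v : ℝ | ∃ x : Fin k → ℝ, x i = t ∧
      v = cCost x - ∑ j ∈ Finset.univ.erase i, f j (x j)} (f i t)

/-- The monotone curve `γ_f(t) = ((g_1')⁻¹(t), …, (g_k')⁻¹(t))` where `g_i = f_i + q`,
`q(x) = x²/2`, so that `g_i'(y) = f_i'(y) + y`. -/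
def curveOf {k : ℕ} (f : Fin k → ℝ → ℝ) (t : ℝ) : Fin k → ℝ :=
  fun i => Function.invFun (fun y : ℝ => deriv (f i) y + y) t

/-- The empirical objective
`n⁻¹ Σ_m [H(X_m; h) + λ ‖X_m − γ_h(s(X_m))‖²]` for samples `X_1, …, X_n`. -/
def empObj {k : ℕ} (n : ℕ) (lam : ℝ) (X : Fin n → Fin k → ℝ)
    (h : Fin k → ℝ → ℝ) : ℝ :=
  (n : ℝ)⁻¹ * ∑ m : Fin n,
    (Hfun h (X m) + lam * ∑ i, (X m i - curveOf h (sCoord (X m)) i) ^ 2)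

/-!
With `g_i = f_i + y² / 2` one has `H(x; f) = Σ g_i(x_i) − s(x)² / 2`, and `γ_f(t)` is the point
where every `g_i'` equals `t`. The Bregman bounds `(b − a)² / 2 ≤ g(b) − g(a) − g'(a)(b − a)
≤ (1 + m₂)(b − a)² / 2`, together with `c`-conjugacy (`H ≥ 0` with infimum `0` on each
hyperplane `x_i = t`), show that `s(γ_f(t)) = t`, that `‖x − γ_f(s(x))‖² ≤ 2 H(x; f)`, and that
`H(u + r; f) ≤ (1 + m₂)/2 ‖r‖² − s(r)² / 2` and `‖u + r − γ_f(s(u + r))‖² ≤ 2‖r‖² + 2 s(r)²`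
for `u ∈ Γ`. Comparing the empirical objective of `f̂` with that of the competitor `f` bounds
the empirical MSE pathwise by sample means of `‖X − γ_f(s(X))‖²` and `H(X; f)`, whose
expectations are controlled by `E‖R‖²` and `E s(R)²`. Uncorrelated noise gives
`E s(R)² = E‖R‖²`, which is why the bound does not depend on `k`.
-/

open Filter Topology

section Coordinates

variable {k : ℕ}

theorem sCoord_add (x y : Fin k → ℝ) : sCoord (x + y) = sCoord x + sCoord y :=
  sum_add_distrib

theorem sCoord_sq (x : Fin k → ℝ) : sCoord x ^ 2 = ∑ i, ∑ j, x i * x j := by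
  rw [sCoord, sq, sum_mul_sum]

theorem continuous_sCoord : Continuous (sCoord : (Fin k → ℝ) → ℝ) :=
  continuous_finsetSum _ fun i _ => continuous_apply i

theorem cCost_eq (x : Fin k → ℝ) : cCost x = (sCoord x ^ 2 - ∑ i, x i ^ 2) / 2 := by
  have hcost : cCost x = ∑ i, ∑ j, if i < j then x i * x j else 0 := by
    rw [cCost, sum_filter, ← univ_product_univ, sum_product]
  have hsplit : ∀ i j : Fin k, x i * x j = (if i < j then x i * x j else 0) +
      (if j < i then x j * x i else 0) + (if i = j then x i ^ 2 else 0) := by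
    intro i j
    rcases lt_trichotomy i j with hij | rfl | hij
    · simp [hij, hij.ne, hij.not_gt]
    · simp [sq]
    · simp [hij, hij.ne', hij.not_gt, mul_comm]
  have hsq : sCoord x ^ 2 = 2 * cCost x + ∑ i, x i ^ 2 := by
    rw [sCoord_sq, sum_congr rfl fun i _ => sum_congr rfl fun j _ => hsplit i j]
    simp only [sum_add_distrib]
    rw [sum_comm (f := fun i j => if j < i then x j * x i else 0), ← hcost]
    simp [two_mul]
  linarith

theorem Hfun_eq_sum_sub (h : Fin k → ℝ → ℝ) (x : Fin k → ℝ) :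
    Hfun h x = ∑ i, (h i (x i) + x i ^ 2 / 2) - sCoord x ^ 2 / 2 := by
  rw [Hfun, cCost_eq, sum_add_distrib, ← sum_div]
  ring

end Coordinates

theorem add_deriv_mul_sub_le_of_monotone_deriv {F : ℝ → ℝ} (hd : Differentiable ℝ F)
    (hm : Monotone (deriv F)) (a b : ℝ) : F a + deriv F a * (b - a) ≤ F b := by
  rcases le_total a b with hab | hba
  · have := (convex_Ici a).mul_sub_le_image_sub_of_le_deriv hd.continuous.continuousOn
      hd.differentiableOn (fun x hx => hm (by simpa using (interior_subset hx : x ∈ Set.Ici a)))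
      a Set.self_mem_Ici b hab hab
    linarith
  · have := (convex_Iic a).image_sub_le_mul_sub_of_deriv_le hd.continuous.continuousOn
      hd.differentiableOn (fun x hx => hm (by simpa using (interior_subset hx : x ∈ Set.Iic a)))
      b hba a Set.self_mem_Iic hba
    linarith

namespace Cm

variable {m₀ m₁ m₂ m₃ : ℝ} {p : ℝ → ℝ}

theorem differentiable (hp : p ∈ Cm m₀ m₁ m₂ m₃) : Differentiable ℝ p :=
  hp.1.differentiable (by norm_num)

theorem differentiable_deriv (hp : p ∈ Cm m₀ m₁ m₂ m₃) : Differentiable ℝ (deriv p) :=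
  hp.1.differentiable_deriv_two

theorem monotone_deriv (hp : p ∈ Cm m₀ m₁ m₂ m₃) : Monotone (deriv p) :=
  monotone_of_deriv_nonneg (differentiable_deriv hp) fun x => (hp.2.2.2.1 x).1

theorem deriv_sub_deriv_le (hp : p ∈ Cm m₀ m₁ m₂ m₃) {a b : ℝ} (hab : a ≤ b) :
    deriv p b - deriv p a ≤ m₂ * (b - a) :=
  image_sub_le_mul_sub_of_deriv_le (differentiable_deriv hp) (fun x => (hp.2.2.2.1 x).2) hab

theorem add_deriv_mul_sub_le (hp : p ∈ Cm m₀ m₁ m₂ m₃) (a b : ℝ) :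
    p a + deriv p a * (b - a) ≤ p b :=
  add_deriv_mul_sub_le_of_monotone_deriv (differentiable hp) (monotone_deriv hp) a b

theorem le_add_deriv_mul_sub_add (hp : p ∈ Cm m₀ m₁ m₂ m₃) (a b : ℝ) :
    p b ≤ p a + deriv p a * (b - a) + m₂ * (b - a) ^ 2 / 2 := by
  -- tangent-line bound for the convex function `m₂ y² / 2 - p y`
  set F : ℝ → ℝ := fun y => m₂ * y ^ 2 / 2 - p y
  have hF : ∀ y, HasDerivAt F (m₂ * y - deriv p y) y := fun y =>
    ((((hasDerivAt_pow 2 y).const_mul m₂).div_const 2).sub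
      (differentiable hp y).hasDerivAt).congr_deriv (by ring)
  have hderiv : deriv F = fun y => m₂ * y - deriv p y := funext fun y => (hF y).deriv
  have hmono : Monotone (deriv F) := fun a b hab => by
    simp only [hderiv]
    linarith [deriv_sub_deriv_le hp hab]
  have := add_deriv_mul_sub_le_of_monotone_deriv (fun y => (hF y).differentiableAt) hmono a b
  simp only [F, hderiv] at this
  linarith

theorem strictMono_deriv_add_id (hp : p ∈ Cm m₀ m₁ m₂ m₃) : StrictMono fun y => deriv p y + y :=
  (monotone_deriv hp).add_strictMono strictMono_id

theorem surjective_deriv_add_id (hp : p ∈ Cm m₀ m₁ m₂ m₃) :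
    Function.Surjective fun y => deriv p y + y := by
  refine Continuous.surjective ((differentiable_deriv hp).continuous.add continuous_id) ?_ ?_
  · refine tendsto_atTop_mono' _ ?_ (tendsto_atTop_add_const_left _ (deriv p 0) tendsto_id)
    filter_upwards [eventually_ge_atTop 0] with y hy
    exact add_le_add_left (monotone_deriv hp hy) y
  · refine tendsto_atBot_mono' _ ?_ (tendsto_atBot_add_const_left _ (deriv p 0) tendsto_id)
    filter_upwards [eventually_le_atBot 0] with y hy
    exact add_le_add_left (monotone_deriv hp hy) y

end Cm

section Curve

variable {k : ℕ} {m₀ m₁ m₂ m₃ : ℝ} {h : Fin k → ℝ → ℝ}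

def curveResid (h : Fin k → ℝ → ℝ) (x : Fin k → ℝ) : ℝ :=
  ∑ i, (x i - curveOf h (sCoord x) i) ^ 2

def curveDefect (h : Fin k → ℝ → ℝ) (τ : ℝ) : ℝ :=
  Hfun h (curveOf h τ) + (sCoord (curveOf h τ) - τ) ^ 2 / 2

theorem curveResid_nonneg (h : Fin k → ℝ → ℝ) (x : Fin k → ℝ) : 0 ≤ curveResid h x :=
  sum_nonneg fun _ _ => sq_nonneg _

theorem deriv_curveOf_add (hh : ∀ i, h i ∈ Cm m₀ m₁ m₂ m₃) (i : Fin k) (t : ℝ) :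
    deriv (h i) (curveOf h t i) + curveOf h t i = t :=
  Function.rightInverse_invFun (Cm.surjective_deriv_add_id (hh i)) t

theorem curveOf_deriv_add (hh : ∀ i, h i ∈ Cm m₀ m₁ m₂ m₃) (i : Fin k) (y : ℝ) :
    curveOf h (deriv (h i) y + y) i = y :=
  (Cm.strictMono_deriv_add_id (hh i)).injective (deriv_curveOf_add hh i _)

theorem monotone_curveOf (hh : ∀ i, h i ∈ Cm m₀ m₁ m₂ m₃) (i : Fin k) :
    Monotone fun t => curveOf h t i := fun t t' htt =>
  (Cm.strictMono_deriv_add_id (hh i)).le_iff_le.mp <| by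
    simpa only [deriv_curveOf_add hh] using htt

theorem continuous_curveOf (hh : ∀ i, h i ∈ Cm m₀ m₁ m₂ m₃) (i : Fin k) :
    Continuous fun t => curveOf h t i :=
  (monotone_curveOf hh i).continuous_of_surjective fun y => ⟨_, curveOf_deriv_add hh i y⟩

theorem continuous_Hfun (hh : ∀ i, h i ∈ Cm m₀ m₁ m₂ m₃) : Continuous (Hfun h) := by
  have hp : ∀ i, Continuous (h i) := fun i => (hh i).1.continuous
  have hs := continuous_sCoord (k := k)
  rw [funext (Hfun_eq_sum_sub h)]
  fun_prop

theorem continuous_curveResid (hh : ∀ i, h i ∈ Cm m₀ m₁ m₂ m₃) : Continuous (curveResid h) := by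
  have hγ : ∀ i, Continuous fun x : Fin k → ℝ => curveOf h (sCoord x) i := fun i =>
    (continuous_curveOf hh i).comp continuous_sCoord
  unfold curveResid
  fun_prop

theorem CConjugateTuple.Hfun_nonneg [NeZero k] (hconj : CConjugateTuple h) (x : Fin k → ℝ) :
    0 ≤ Hfun h x := by
  have := (hconj 0 (x 0)).1 ⟨x, rfl, rfl⟩
  rw [Hfun, ← sum_erase_add _ _ (mem_univ 0)]
  linarith

theorem CConjugateTuple.exists_Hfun_lt (hconj : CConjugateTuple h) (i : Fin k) (t : ℝ)
    {ε : ℝ} (hε : 0 < ε) : ∃ x : Fin k → ℝ, x i = t ∧ Hfun h x < ε := by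
  obtain ⟨_, ⟨x, hxi, rfl⟩, hlt, -⟩ := (hconj i t).exists_between (sub_lt_self _ hε)
  refine ⟨x, hxi, ?_⟩
  rw [Hfun, ← sum_erase_add _ _ (mem_univ i), hxi]
  linarith

theorem curveDefect_add_half_curveResid_le (hh : ∀ i, h i ∈ Cm m₀ m₁ m₂ m₃) (x : Fin k → ℝ) :
    curveDefect h (sCoord x) + curveResid h x / 2 ≤ Hfun h x := by
  rw [curveDefect, curveResid, Hfun_eq_sum_sub, Hfun_eq_sum_sub]
  set s := sCoord x
  set γ := curveOf h s
  -- `y ↦ h i y + y² / 2` is `1`-strongly convex with derivative `s` at `γ i`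
  have hi : ∀ i, h i (γ i) + γ i ^ 2 / 2 + s * (x i - γ i) + (x i - γ i) ^ 2 / 2 ≤
      h i (x i) + x i ^ 2 / 2 := fun i => by
    have := Cm.add_deriv_mul_sub_le (hh i) (γ i) (x i)
    rw [show deriv (h i) (γ i) = s - γ i by linarith [deriv_curveOf_add hh i s]] at this
    linarith
  have hsum := sum_le_sum fun i (_ : i ∈ univ) => hi i
  simp only [sum_add_distrib, ← mul_sum, ← sum_div, sum_sub_distrib] at hsum ⊢
  rw [show ∑ i, x i = s from rfl, show ∑ i, γ i = sCoord γ from rfl] at hsum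
  linarith

theorem CConjugateTuple.curveDefect_nonneg [NeZero k] (hconj : CConjugateTuple h) (τ : ℝ) :
    0 ≤ curveDefect h τ :=
  add_nonneg (hconj.Hfun_nonneg _) (by positivity)

theorem continuous_curveDefect (hh : ∀ i, h i ∈ Cm m₀ m₁ m₂ m₃) :
    Continuous (curveDefect h) := by
  have hγ := continuous_curveOf hh
  have hs : Continuous fun t => sCoord (curveOf h t) := continuous_sCoord.comp (continuous_pi hγ)
  have hp : ∀ i, Continuous (h i) := fun i => (hh i).1.continuous
  unfold curveDefect
  simp only [Hfun_eq_sum_sub]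
  fun_prop

theorem curveDefect_eq_zero [NeZero k] (hh : ∀ i, h i ∈ Cm m₀ m₁ m₂ m₃)
    (hconj : CConjugateTuple h) (τ : ℝ) : curveDefect h τ = 0 := by
  -- near-minimisers `x` of `H` with `x 0 = γ₀(τ)` give levels `s x` at which the defect is
  -- small and `γ₀` is close to `γ₀(τ)`; since `γ₀` has a continuous inverse, `s x → τ`
  have hsmall : ∀ n : ℕ, ∃ σ, curveDefect h σ + (curveOf h τ 0 - curveOf h σ 0) ^ 2 / 2 <
      1 / (n + 1) := fun n => by
    obtain ⟨x, hx0, hx⟩ := hconj.exists_Hfun_lt 0 (curveOf h τ 0) (Nat.one_div_pos_of_nat (n := n))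
    have hle : (x 0 - curveOf h (sCoord x) 0) ^ 2 ≤ curveResid h x :=
      single_le_sum (f := fun i => (x i - curveOf h (sCoord x) i) ^ 2)
        (fun i _ => sq_nonneg _) (mem_univ 0)
    rw [hx0] at hle
    exact ⟨sCoord x, ((add_le_add le_rfl (by linarith)).trans
      (curveDefect_add_half_curveResid_le hh x)).trans_lt hx⟩
  choose σ hσ using hsmall
  have hdefect : Tendsto (fun n => curveDefect h (σ n)) atTop (𝓝 0) :=
    squeeze_zero (fun n => hconj.curveDefect_nonneg _)
      (fun n => by linarith [hσ n, sq_nonneg (curveOf h τ 0 - curveOf h (σ n) 0)])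
      tendsto_one_div_add_atTop_nhds_zero_nat
  have hγ : Tendsto (fun n => curveOf h (σ n) 0) atTop (𝓝 (curveOf h τ 0)) := by
    have hsq : Tendsto (fun n => (curveOf h τ 0 - curveOf h (σ n) 0) ^ 2) atTop (𝓝 0) :=
      squeeze_zero (g := fun n : ℕ => 2 * (1 / ((n : ℝ) + 1))) (fun n => sq_nonneg _)
        (fun n => by linarith [hσ n, hconj.curveDefect_nonneg (σ n)])
        (by simpa using (tendsto_one_div_add_atTop_nhds_zero_nat (𝕜 := ℝ)).const_mul 2)
    rw [tendsto_iff_dist_tendsto_zero]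
    simpa [Real.sqrt_sq_eq_abs, Real.dist_eq, abs_sub_comm] using hsq.sqrt
  have hστ : Tendsto σ atTop (𝓝 τ) := by
    have hD : Continuous fun y => deriv (h 0) y + y :=
      (Cm.differentiable_deriv (hh 0)).continuous.add continuous_id
    have := (hD.tendsto _).comp hγ
    simpa only [Function.comp_def, deriv_curveOf_add hh] using this
  exact tendsto_nhds_unique (((continuous_curveDefect hh).tendsto τ).comp hστ) hdefect

theorem sCoord_curveOf [NeZero k] (hh : ∀ i, h i ∈ Cm m₀ m₁ m₂ m₃) (hconj : CConjugateTuple h)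
    (τ : ℝ) : sCoord (curveOf h τ) = τ := by
  have h0 := curveDefect_eq_zero hh hconj τ
  rw [curveDefect] at h0
  have hsq : (sCoord (curveOf h τ) - τ) ^ 2 = 0 := by
    linarith [hconj.Hfun_nonneg (curveOf h τ), sq_nonneg (sCoord (curveOf h τ) - τ)]
  exact sub_eq_zero.mp (pow_eq_zero_iff two_ne_zero |>.mp hsq)

end Curve

section Zeros

variable {k : ℕ} [NeZero k] {m₀ m₁ m₂ m₃ : ℝ} {h : Fin k → ℝ → ℝ}

theorem curveResid_le_two_mul_Hfun (hh : ∀ i, h i ∈ Cm m₀ m₁ m₂ m₃) (hconj : CConjugateTuple h)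
    (x : Fin k → ℝ) : curveResid h x ≤ 2 * Hfun h x := by
  linarith [curveDefect_add_half_curveResid_le hh x, hconj.curveDefect_nonneg (sCoord x)]

theorem curveOf_sCoord_of_Hfun_eq_zero (hh : ∀ i, h i ∈ Cm m₀ m₁ m₂ m₃)
    (hconj : CConjugateTuple h) {u : Fin k → ℝ} (hu : Hfun h u = 0) :
    curveOf h (sCoord u) = u := by
  have hres : curveResid h u = 0 :=
    le_antisymm (by linarith [curveResid_le_two_mul_Hfun hh hconj u])
      (curveResid_nonneg h u)
  funext i
  have := (sum_eq_zero_iff_of_nonneg fun j _ => sq_nonneg _).mp hres i (mem_univ i)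
  linarith [pow_eq_zero_iff two_ne_zero |>.mp this]

theorem sum_sq_curveOf_sub_le (hh : ∀ i, h i ∈ Cm m₀ m₁ m₂ m₃) (hconj : CConjugateTuple h)
    (t t' : ℝ) : ∑ i, (curveOf h t i - curveOf h t' i) ^ 2 ≤ (t - t') ^ 2 := by
  wlog htt : t' ≤ t generalizing t t'
  · simpa only [sub_sq_comm] using this t' t (le_of_not_ge htt)
  have hsum : ∑ i, (curveOf h t i - curveOf h t' i) = t - t' := by
    rw [sum_sub_distrib]
    exact congrArg₂ (· - ·) (sCoord_curveOf hh hconj t) (sCoord_curveOf hh hconj t')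
  rw [← hsum]
  exact sum_sq_le_sq_sum_of_nonneg fun i _ => sub_nonneg.mpr (monotone_curveOf hh i htt)

theorem Hfun_add_le_of_Hfun_eq_zero (hh : ∀ i, h i ∈ Cm m₀ m₁ m₂ m₃)
    (hconj : CConjugateTuple h) {u : Fin k → ℝ} (hu : Hfun h u = 0) (r : Fin k → ℝ) :
    Hfun h (u + r) ≤ (1 + m₂) / 2 * ∑ i, r i ^ 2 - sCoord r ^ 2 / 2 := by
  have hderiv : ∀ i, deriv (h i) (u i) = sCoord u - u i := fun i => by
    have := deriv_curveOf_add hh i (sCoord u)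
    rw [curveOf_sCoord_of_Hfun_eq_zero hh hconj hu] at this
    linarith
  have hi : ∀ i, h i (u i + r i) + (u i + r i) ^ 2 / 2 ≤
      h i (u i) + u i ^ 2 / 2 + sCoord u * r i + (1 + m₂) / 2 * r i ^ 2 := fun i => by
    have := Cm.le_add_deriv_mul_sub_add (hh i) (u i) (u i + r i)
    rw [hderiv] at this
    linarith
  have hsum := sum_le_sum fun i (_ : i ∈ univ) => hi i
  simp only [sum_add_distrib, ← mul_sum, ← sum_div] at hsum
  rw [Hfun_eq_sum_sub] at hu ⊢
  simp only [sum_add_distrib, ← sum_div, Pi.add_apply, sCoord_add] at hu ⊢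
  rw [show ∑ i, r i = sCoord r from rfl] at hsum
  linarith

theorem curveResid_add_le_of_Hfun_eq_zero (hh : ∀ i, h i ∈ Cm m₀ m₁ m₂ m₃)
    (hconj : CConjugateTuple h) {u : Fin k → ℝ} (hu : Hfun h u = 0) (r : Fin k → ℝ) :
    curveResid h (u + r) ≤ 2 * ∑ i, r i ^ 2 + 2 * sCoord r ^ 2 := by
  have hi : ∀ i, (u i + r i - curveOf h (sCoord (u + r)) i) ^ 2 ≤
      2 * r i ^ 2 + 2 * (curveOf h (sCoord u) i - curveOf h (sCoord (u + r)) i) ^ 2 := fun i => by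
    nth_rewrite 1 [← curveOf_sCoord_of_Hfun_eq_zero hh hconj hu]
    linarith [sq_nonneg (r i - (curveOf h (sCoord u) i - curveOf h (sCoord (u + r)) i))]
  have hcurve : ∑ i, (curveOf h (sCoord u) i - curveOf h (sCoord (u + r)) i) ^ 2 ≤
      sCoord r ^ 2 :=
    (sum_sq_curveOf_sub_le hh hconj _ _).trans_eq (by rw [sCoord_add]; ring)
  calc curveResid h (u + r)
      ≤ ∑ i, (2 * r i ^ 2 + 2 * (curveOf h (sCoord u) i - curveOf h (sCoord (u + r)) i) ^ 2) :=
        sum_le_sum fun i _ => hi i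
    _ ≤ 2 * ∑ i, r i ^ 2 + 2 * sCoord r ^ 2 := by
        rw [sum_add_distrib, ← mul_sum, ← mul_sum]
        linarith

end Zeros

section SampleMean

variable {α : Type*} {n : ℕ}

def sampleMean (x : Fin n → α) (φ : α → ℝ) : ℝ :=
  (n : ℝ)⁻¹ * ∑ m, φ (x m)

theorem sampleMean_mono (x : Fin n → α) {φ ψ : α → ℝ} (hφψ : ∀ y, φ y ≤ ψ y) :
    sampleMean x φ ≤ sampleMean x ψ :=
  mul_le_mul_of_nonneg_left (sum_le_sum fun m _ => hφψ _) (by positivity)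

theorem sampleMean_nonneg (x : Fin n → α) {φ : α → ℝ} (hφ : ∀ y, 0 ≤ φ y) :
    0 ≤ sampleMean x φ :=
  mul_nonneg (by positivity) (sum_nonneg fun m _ => hφ _)

theorem sampleMean_add (x : Fin n → α) (φ ψ : α → ℝ) :
    sampleMean x (fun y => φ y + ψ y) = sampleMean x φ + sampleMean x ψ := by
  simp only [sampleMean, sum_add_distrib, mul_add]

theorem sampleMean_const_mul (x : Fin n → α) (c : ℝ) (φ : α → ℝ) :
    sampleMean x (fun y => c * φ y) = c * sampleMean x φ := by
  simp only [sampleMean, ← mul_sum]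
  ring

end SampleMean

theorem empObj_eq_sampleMean {k n : ℕ} (lam : ℝ) (x : Fin n → Fin k → ℝ)
    (h : Fin k → ℝ → ℝ) :
    empObj n lam x h = sampleMean x (Hfun h) + lam * sampleMean x (curveResid h) := by
  rw [← sampleMean_const_mul, ← sampleMean_add]
  rfl

theorem sampleMean_sum_sq_curveOf_sub_le {k n : ℕ} [NeZero k] {lam m₀ m₁ m₂ m₃ : ℝ}
    (hlam : 0 ≤ lam) {f g : Fin k → ℝ → ℝ} (hg : ∀ i, g i ∈ Cm m₀ m₁ m₂ m₃)
    (hgconj : CConjugateTuple g) (x : Fin n → Fin k → ℝ)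
    (hmin : empObj n lam x g ≤ empObj n lam x f) :
    (2 * lam + 1) *
        sampleMean x (fun y => ∑ i, (curveOf f (sCoord y) i - curveOf g (sCoord y) i) ^ 2) ≤
      (8 * lam + 2) * sampleMean x (curveResid f) + 4 * sampleMean x (Hfun f) := by
  have hdist : sampleMean x (fun y => ∑ i, (curveOf f (sCoord y) i - curveOf g (sCoord y) i) ^ 2)
      ≤ 2 * sampleMean x (curveResid f) + 2 * sampleMean x (curveResid g) := by
    rw [← sampleMean_const_mul, ← sampleMean_const_mul, ← sampleMean_add]
    refine sampleMean_mono x fun y => ?_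
    simp only [curveResid, mul_sum, ← sum_add_distrib]
    exact sum_le_sum fun i _ => by
      linarith [sq_nonneg (y i - curveOf f (sCoord y) i + (y i - curveOf g (sCoord y) i))]
  have hresid : sampleMean x (curveResid g) ≤ 2 * sampleMean x (Hfun g) := by
    rw [← sampleMean_const_mul]
    exact sampleMean_mono x (curveResid_le_two_mul_Hfun hg hgconj)
  rw [empObj_eq_sampleMean, empObj_eq_sampleMean] at hmin
  linarith [mul_le_mul_of_nonneg_left hdist (by linarith : 0 ≤ 2 * lam + 1)]

section Expectation

variable {Ω : Type*} [MeasurableSpace Ω] {μ : Measure Ω}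

theorem integrable_sampleMean {α : Type*} [MeasurableSpace α] {n : ℕ} {X : Fin n → Ω → α}
    {Z : Ω → α} {φ : α → ℝ} (hX : ∀ m, IdentDistrib (X m) Z μ μ) (hφ : Measurable φ)
    (hφZ : Integrable (fun ω => φ (Z ω)) μ) :
    Integrable (fun ω => sampleMean (fun m => X m ω) φ) μ :=
  (integrable_finsetSum _ fun m _ => ((hX m).comp hφ).integrable_iff.mpr hφZ).const_mul _

theorem integral_sampleMean {α : Type*} [MeasurableSpace α] {n : ℕ} (hn : n ≠ 0)
    {X : Fin n → Ω → α} {Z : Ω → α} {φ : α → ℝ} (hX : ∀ m, IdentDistrib (X m) Z μ μ)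
    (hφ : Measurable φ) (hφZ : Integrable (fun ω => φ (Z ω)) μ) :
    ∫ ω, sampleMean (fun m => X m ω) φ ∂μ = ∫ ω, φ (Z ω) ∂μ := by
  have hint : ∀ m, Integrable (fun ω => φ (X m ω)) μ := fun m =>
    ((hX m).comp hφ).integrable_iff.mpr hφZ
  have heq : ∀ m, ∫ ω, φ (X m ω) ∂μ = ∫ ω, φ (Z ω) ∂μ := fun m => ((hX m).comp hφ).integral_eq
  simp only [sampleMean]
  rw [integral_const_mul, integral_finsetSum _ fun m _ => hint m]
  simp only [heq, sum_const, card_univ, Fintype.card_fin, nsmul_eq_mul]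
  field_simp

theorem abs_mul_le_sum_sq {k : ℕ} (x : Fin k → ℝ) (i j : Fin k) :
    |x i * x j| ≤ ∑ l, x l ^ 2 := by
  have hle : ∀ l, x l ^ 2 ≤ ∑ l, x l ^ 2 := fun l =>
    single_le_sum (f := fun l => x l ^ 2) (fun l _ => sq_nonneg _) (mem_univ l)
  rw [abs_mul]
  linarith [sq_nonneg (|x i| - |x j|), sq_abs (x i), sq_abs (x j), hle i, hle j]

variable {k : ℕ} {R : Ω → Fin k → ℝ}

theorem integrable_mul_apply (hR : Measurable R)
    (hR2 : Integrable (fun ω => ∑ i, R ω i ^ 2) μ) (i j : Fin k) :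
    Integrable (fun ω => R ω i * R ω j) μ :=
  hR2.mono' (((measurable_pi_apply i).comp hR).mul ((measurable_pi_apply j).comp hR)).aestronglyMeasurable <| ae_of_all _ fun ω => by
    simpa only [Real.norm_eq_abs] using abs_mul_le_sum_sq (R ω) i j

theorem integrable_sCoord_sq (hR : Measurable R) (hR2 : Integrable (fun ω => ∑ i, R ω i ^ 2) μ) :
    Integrable (fun ω => sCoord (R ω) ^ 2) μ := by
  simp only [sCoord_sq]
  exact integrable_finsetSum _ fun i _ =>
    integrable_finsetSum _ fun j _ => integrable_mul_apply hR hR2 i j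

theorem integral_sCoord_sq_of_uncorrelated (hR : Measurable R)
    (hR2 : Integrable (fun ω => ∑ i, R ω i ^ 2) μ)
    (huncorr : ∀ i j : Fin k, i ≠ j → ∫ ω, R ω i * R ω j ∂μ = 0) :
    ∫ ω, sCoord (R ω) ^ 2 ∂μ = ∫ ω, ∑ i, R ω i ^ 2 ∂μ := by
  have hint := integrable_mul_apply hR hR2
  simp only [sCoord_sq]
  rw [integral_finsetSum _ fun i _ => integrable_finsetSum _ fun j _ => hint i j,
    integral_finsetSum _ fun i _ => (hint i i).congr (ae_of_all _ fun ω => (sq _).symm)]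
  refine sum_congr rfl fun i _ => ?_
  rw [integral_finsetSum _ fun j _ => hint i j,
    sum_eq_single i (fun j _ hji => huncorr i j hji.symm) (fun hi => absurd (mem_univ i) hi)]
  simp only [sq]

end Expectation

section Model

variable {Ω : Type*} [MeasurableSpace Ω] {μ : Measure Ω} {k : ℕ} [NeZero k]
  {m₀ m₁ m₂ m₃ : ℝ} {f : Fin k → ℝ → ℝ} {U R : Ω → Fin k → ℝ}

theorem integrable_curveResid_add (hf : ∀ i, f i ∈ Cm m₀ m₁ m₂ m₃) (hconj : CConjugateTuple f)
    (hU : Measurable U) (hR : Measurable R) (hUΓ : ∀ᵐ ω ∂μ, Hfun f (U ω) = 0)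
    (hR2 : Integrable (fun ω => ∑ i, R ω i ^ 2) μ) :
    Integrable (fun ω => curveResid f (U ω + R ω)) μ :=
  ((hR2.const_mul 2).add ((integrable_sCoord_sq hR hR2).const_mul 2)).mono'
    ((continuous_curveResid hf).measurable.comp (hU.add hR)).aestronglyMeasurable <|
    hUΓ.mono fun ω hω => by
      rw [Real.norm_of_nonneg (curveResid_nonneg _ _)]
      exact curveResid_add_le_of_Hfun_eq_zero hf hconj hω (R ω)

theorem integral_curveResid_add_le (hf : ∀ i, f i ∈ Cm m₀ m₁ m₂ m₃) (hconj : CConjugateTuple f)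
    (hR : Measurable R) (hUΓ : ∀ᵐ ω ∂μ, Hfun f (U ω) = 0)
    (hR2 : Integrable (fun ω => ∑ i, R ω i ^ 2) μ)
    (huncorr : ∀ i j : Fin k, i ≠ j → ∫ ω, R ω i * R ω j ∂μ = 0) :
    ∫ ω, curveResid f (U ω + R ω) ∂μ ≤ 4 * ∫ ω, ∑ i, R ω i ^ 2 ∂μ := by
  have hs := integrable_sCoord_sq hR hR2
  calc ∫ ω, curveResid f (U ω + R ω) ∂μ
      ≤ ∫ ω, (2 * ∑ i, R ω i ^ 2 + 2 * sCoord (R ω) ^ 2) ∂μ :=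
        integral_mono_of_nonneg (ae_of_all _ fun ω => curveResid_nonneg _ _)
          ((hR2.const_mul 2).add (hs.const_mul 2))
          (hUΓ.mono fun ω hω => curveResid_add_le_of_Hfun_eq_zero hf hconj hω (R ω))
    _ = 4 * ∫ ω, ∑ i, R ω i ^ 2 ∂μ := by
        rw [integral_add (hR2.const_mul 2) (hs.const_mul 2), integral_const_mul,
          integral_const_mul, integral_sCoord_sq_of_uncorrelated hR hR2 huncorr]
        ring

theorem integrable_Hfun_add (hf : ∀ i, f i ∈ Cm m₀ m₁ m₂ m₃) (hconj : CConjugateTuple f)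
    (hU : Measurable U) (hR : Measurable R) (hUΓ : ∀ᵐ ω ∂μ, Hfun f (U ω) = 0)
    (hR2 : Integrable (fun ω => ∑ i, R ω i ^ 2) μ) :
    Integrable (fun ω => Hfun f (U ω + R ω)) μ :=
  (hR2.const_mul ((1 + m₂) / 2)).mono'
    ((continuous_Hfun hf).measurable.comp (hU.add hR)).aestronglyMeasurable <|
    hUΓ.mono fun ω hω => by
      rw [Real.norm_of_nonneg (hconj.Hfun_nonneg _)]
      linarith [Hfun_add_le_of_Hfun_eq_zero hf hconj hω (R ω), sq_nonneg (sCoord (R ω))]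

theorem integral_Hfun_add_le (hf : ∀ i, f i ∈ Cm m₀ m₁ m₂ m₃) (hconj : CConjugateTuple f)
    (hR : Measurable R) (hUΓ : ∀ᵐ ω ∂μ, Hfun f (U ω) = 0)
    (hR2 : Integrable (fun ω => ∑ i, R ω i ^ 2) μ)
    (huncorr : ∀ i j : Fin k, i ≠ j → ∫ ω, R ω i * R ω j ∂μ = 0) :
    ∫ ω, Hfun f (U ω + R ω) ∂μ ≤ m₂ / 2 * ∫ ω, ∑ i, R ω i ^ 2 ∂μ := by
  have hs := integrable_sCoord_sq hR hR2
  calc ∫ ω, Hfun f (U ω + R ω) ∂μ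
      ≤ ∫ ω, ((1 + m₂) / 2 * ∑ i, R ω i ^ 2 - sCoord (R ω) ^ 2 / 2) ∂μ :=
        integral_mono_of_nonneg (ae_of_all _ fun ω => hconj.Hfun_nonneg _)
          ((hR2.const_mul _).sub (hs.div_const 2))
          (hUΓ.mono fun ω hω => Hfun_add_le_of_Hfun_eq_zero hf hconj hω (R ω))
    _ = m₂ / 2 * ∫ ω, ∑ i, R ω i ^ 2 ∂μ := by
        rw [integral_sub (hR2.const_mul _) (hs.div_const 2), integral_const_mul, integral_div,
          integral_sCoord_sq_of_uncorrelated hR hR2 huncorr]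
        ring

end Model

theorem expected_empirical_mse_bound_uncorrelated_general
    (k n : ℕ) (hk : 2 ≤ k) (hn : 0 < n)
    (lam : ℝ) (hlam : 0 ≤ lam)
    (m₀ m₁ m₂ m₃ : ℝ)
    (f : Fin k → ℝ → ℝ) (hf : ∀ i, f i ∈ Cm m₀ m₁ m₂ m₃) (hconj : CConjugateTuple f)
    {Ω : Type*} [MeasurableSpace Ω] (μ : Measure Ω)
    (U R : Ω → Fin k → ℝ)
    (hUmeas : Measurable U) (hRmeas : Measurable R)
    (hUΓ : ∀ᵐ ω ∂μ, Hfun f (U ω) = 0)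
    (hR2 : Integrable (fun ω => ∑ i, (R ω i) ^ 2) μ)
    (hRuncorr : ∀ i j : Fin k, i ≠ j → ∫ ω, R ω i * R ω j ∂μ = 0)
    (X : Fin n → Ω → Fin k → ℝ)
    (hXdist : ∀ m, IdentDistrib (X m) (fun ω => U ω + R ω) μ μ)
    (fhat : Ω → Fin k → ℝ → ℝ)
    (hfhat : ∀ᵐ ω ∂μ,
      (∀ i, fhat ω i ∈ Cm m₀ m₁ m₂ m₃) ∧ CConjugateTuple (fhat ω) ∧
      ∀ h : Fin k → ℝ → ℝ, (∀ i, h i ∈ Cm m₀ m₁ m₂ m₃) → CConjugateTuple h →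
        empObj n lam (fun m => X m ω) (fhat ω) ≤ empObj n lam (fun m => X m ω) h) :
    ∫ ω, (n : ℝ)⁻¹ * ∑ m : Fin n, ∑ i,
        (curveOf f (sCoord (X m ω)) i - curveOf (fhat ω) (sCoord (X m ω)) i) ^ 2 ∂μ ≤
      (32 * lam + 2 * m₂ + 8) / (2 * lam + 1) *
        ∫ ω, ∑ i, (R ω i) ^ 2 ∂μ := by
  have : NeZero k := ⟨by omega⟩
  have hden : 0 < 2 * lam + 1 := by linarith
  have hψ := integrable_curveResid_add hf hconj hUmeas hRmeas hUΓ hR2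
  have hH := integrable_Hfun_add hf hconj hUmeas hRmeas hUΓ hR2
  have hψmeas := (continuous_curveResid hf).measurable
  have hHmeas := (continuous_Hfun hf).measurable
  have hψX := (integrable_sampleMean hXdist hψmeas hψ).const_mul (8 * lam + 2)
  have hHX := (integrable_sampleMean hXdist hHmeas hH).const_mul 4
  have hpath : ∀ᵐ ω ∂μ, sampleMean (fun m => X m ω)
      (fun y => ∑ i, (curveOf f (sCoord y) i - curveOf (fhat ω) (sCoord y) i) ^ 2) ≤
      (2 * lam + 1)⁻¹ * ((8 * lam + 2) * sampleMean (fun m => X m ω) (curveResid f) +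
        4 * sampleMean (fun m => X m ω) (Hfun f)) := by
    filter_upwards [hfhat] with ω ⟨hmem, hconjω, hmin⟩
    rw [le_inv_mul_iff₀ hden]
    exact sampleMean_sum_sq_curveOf_sub_le hlam hmem hconjω _ (hmin f hf hconj)
  calc _ ≤ ∫ ω, (2 * lam + 1)⁻¹ * ((8 * lam + 2) * sampleMean (fun m => X m ω) (curveResid f) +
          4 * sampleMean (fun m => X m ω) (Hfun f)) ∂μ :=
        integral_mono_of_nonneg
          (ae_of_all _ fun ω => sampleMean_nonneg _ fun y => sum_nonneg fun i _ => sq_nonneg _)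
          ((hψX.add hHX).const_mul _) hpath
    _ = (2 * lam + 1)⁻¹ * ((8 * lam + 2) * ∫ ω, curveResid f (U ω + R ω) ∂μ +
          4 * ∫ ω, Hfun f (U ω + R ω) ∂μ) := by
        rw [integral_const_mul, integral_add hψX hHX, integral_const_mul, integral_const_mul,
          integral_sampleMean hn.ne' hXdist hψmeas hψ, integral_sampleMean hn.ne' hXdist hHmeas hH]
    _ ≤ (2 * lam + 1)⁻¹ * ((8 * lam + 2) * (4 * ∫ ω, ∑ i, R ω i ^ 2 ∂μ) +
          4 * (m₂ / 2 * ∫ ω, ∑ i, R ω i ^ 2 ∂μ)) := by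
        gcongr
        · exact integral_curveResid_add_le hf hconj hRmeas hUΓ hR2 hRuncorr
        · exact integral_Hfun_add_le hf hconj hRmeas hUΓ hR2 hRuncorr
    _ = _ := by
        field_simp
        ring

/-- (Dimension-free expected empirical MSE bound.) Under the hypotheses
of the empirical error theorem, if moreover the noise components are mutually
uncorrelated (`E[R_i R_j] = 0` for `i ≠ j`), then the expected empirical mean squared
error of the curve estimate is at most `(32λ + 2m₂ + 8)/(2λ + 1) · E‖R‖²`,
a bound not depending on the dimension `k`. -/
theorem expected_empirical_mse_bound_uncorrelated
    (k n : ℕ) (hk : 2 ≤ k) (hn : 0 < n)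
    (lam : ℝ) (hlam : 0 ≤ lam)
    (m₀ m₁ m₂ m₃ : ℝ) (hm₀ : 0 ≤ m₀) (hm₁ : 0 ≤ m₁) (hm₂ : 0 ≤ m₂) (hm₃ : 0 ≤ m₃)
    (f : Fin k → ℝ → ℝ) (hf : ∀ i, f i ∈ Cm m₀ m₁ m₂ m₃) (hconj : CConjugateTuple f)
    {Ω : Type*} [MeasurableSpace Ω] (μ : Measure Ω) [IsProbabilityMeasure μ]
    (U R : Ω → Fin k → ℝ)
    (hUmeas : Measurable U) (hRmeas : Measurable R)
    (hindep : IndepFun U R μ)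
    (hUΓ : ∀ᵐ ω ∂μ, Hfun f (U ω) = 0)
    (hRint : ∀ i, Integrable (fun ω => R ω i) μ)
    (hRmean : ∀ i, ∫ ω, R ω i ∂μ = 0)
    (hX2 : Integrable (fun ω => ∑ i, (U ω i + R ω i) ^ 2) μ)
    (hR2 : Integrable (fun ω => ∑ i, (R ω i) ^ 2) μ)
    (hRuncorr : ∀ i j : Fin k, i ≠ j → ∫ ω, R ω i * R ω j ∂μ = 0)
    (X : Fin n → Ω → Fin k → ℝ)
    (hXmeas : ∀ m, Measurable (X m))
    (hXindep : iIndepFun X μ)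
    (hXdist : ∀ m, IdentDistrib (X m) (fun ω => U ω + R ω) μ μ)
    (fhat : Ω → Fin k → ℝ → ℝ)
    (hfhat : ∀ᵐ ω ∂μ,
      (∀ i, fhat ω i ∈ Cm m₀ m₁ m₂ m₃) ∧ CConjugateTuple (fhat ω) ∧
      ∀ h : Fin k → ℝ → ℝ, (∀ i, h i ∈ Cm m₀ m₁ m₂ m₃) → CConjugateTuple h →
        empObj n lam (fun m => X m ω) (fhat ω) ≤ empObj n lam (fun m => X m ω) h)
    (hMSEint : Integrable (fun ω => (n : ℝ)⁻¹ * ∑ m : Fin n, ∑ i,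
      (curveOf f (sCoord (X m ω)) i - curveOf (fhat ω) (sCoord (X m ω)) i) ^ 2) μ) :
    ∫ ω, (n : ℝ)⁻¹ * ∑ m : Fin n, ∑ i,
        (curveOf f (sCoord (X m ω)) i - curveOf (fhat ω) (sCoord (X m ω)) i) ^ 2 ∂μ ≤
      (32 * lam + 2 * m₂ + 8) / (2 * lam + 1) *
        ∫ ω, ∑ i, (R ω i) ^ 2 ∂μ :=
  expected_empirical_mse_bound_uncorrelated_general k n hk hn lam hlam m₀ m₁ m₂ m₃ f hf hconj μ U R
    hUmeas hRmeas hUΓ hR2 hRuncorr X hXdist fhat hfhat
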